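/- arXiv:2304.08432 — 2 statements merged into one kernel-verified Lean document; each statement's English description precedes it below -/
import Mathlib

section
/- Assume regularity condition (H). Define the joint (vertically integrated) surplus S(p) = (1−λ)·p·(1 − F(p)) + λ·∫₀¹ min(v, p)·J·F(v)^{J−1}·f(v) dv. Then: (i) for every p ∈ (0,1), S is differentiable at p with S′(p) = (1−λ)·(1 − F(p) − p·f(p)) + λ·(1 − F(p)^J); and (ii) if p_V ∈ (0,1) satisfies D_V(p_V) = 0, then S(p) ≤ S(p_V) for all p ∈ [0,1]. (Producer surplus is maximized at the best-value managed-campaign posted price, and equals the profit of a vertically integrated platform that owns all the firms.) -/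
/-!
Splitting `min v p` at `v = p` writes the platform part of `S` as
`∫₀ᵖ v dG(v) + p (1 - G p)` with `G = F ^ J`, whose derivative is `1 - F(p) ^ J`; this gives (i).
Since `1 - F(p) ^ J = J ∫ₚ¹ F ^ (J - 1) f`, the derivative `S'` is exactly `D_V`, which is
decreasing under (H) because `F ^ J` is increasing. Hence `S` increases up to the zero `p_V` of
`D_V` and decreases after it.
-/

open intervalIntegral Set

section Primitive

variable {f : ℝ → ℝ} {a b : ℝ}

theorem ContinuousOn.intervalIntegrable_of_mem (hf : ContinuousOn f (Icc a b)) {c d : ℝ}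
    (hc : c ∈ Icc a b) (hd : d ∈ Icc a b) : IntervalIntegrable f MeasureTheory.volume c d :=
  (hf.mono (uIcc_subset_Icc hc hd)).intervalIntegrable

theorem ContinuousOn.hasDerivAt_primitive (hf : ContinuousOn f (Icc a b)) {x : ℝ}
    (hx : x ∈ Ioo a b) : HasDerivAt (fun y => ∫ t in a..y, f t) (f x) x :=
  integral_hasDerivAt_right
    ((hf.mono (Icc_subset_Icc_right hx.2.le)).intervalIntegrable_of_Icc hx.1.le)
    ((hf.mono Ioo_subset_Icc_self).stronglyMeasurableAtFilter isOpen_Ioo x hx)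
    (hf.continuousAt (Icc_mem_nhds hx.1 hx.2))

theorem ContinuousOn.continuousOn_primitive (hf : ContinuousOn f (Icc a b)) :
    ContinuousOn (fun y => ∫ t in a..y, f t) (Icc a b) := by
  rcases le_or_gt a b with hab | hba
  · rw [← uIcc_of_le hab] at hf ⊢
    exact continuousOn_primitive_interval hf.integrableOn_Icc
  · simp [Icc_eq_empty_of_lt hba]

theorem ContinuousOn.monotoneOn_primitive (hf : ContinuousOn f (Icc a b))
    (hf₀ : ∀ x ∈ Icc a b, 0 ≤ f x) : MonotoneOn (fun y => ∫ t in a..y, f t) (Icc a b) :=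
  monotoneOn_of_hasDerivWithinAt_nonneg (convex_Icc a b) hf.continuousOn_primitive
    (fun x hx => (hf.hasDerivAt_primitive (by rwa [interior_Icc] at hx)).hasDerivWithinAt)
    (fun x hx => hf₀ x (interior_subset hx))

theorem integral_mul_pow_mul_eq_sub_pow {F : ℝ → ℝ} (n : ℕ) (hab : a ≤ b)
    (hF : ContinuousOn F (Icc a b)) (hF' : ∀ x ∈ Ioo a b, HasDerivAt F (f x) x)
    (hf : ContinuousOn f (Icc a b)) :
    ∫ v in a..b, n * F v ^ (n - 1) * f v = F b ^ n - F a ^ n :=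
  integral_eq_sub_of_hasDerivAt_of_le hab (hF.pow n) (fun x hx => (hF' x hx).pow n)
    (((continuousOn_const.mul (hF.pow _)).mul hf).intervalIntegrable_of_Icc hab)

end Primitive

section MinIntegral

variable {g : ℝ → ℝ} {a b : ℝ}

theorem integral_min_mul_eq (hg : ContinuousOn g (Icc a b)) {p : ℝ} (hp : p ∈ Icc a b) :
    ∫ v in a..b, min v p * g v
      = (∫ v in a..p, v * g v) + p * ((∫ v in a..b, g v) - ∫ v in a..p, g v) := by
  have ha : a ∈ Icc a b := left_mem_Icc.2 (hp.1.trans hp.2)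
  have hb : b ∈ Icc a b := right_mem_Icc.2 (hp.1.trans hp.2)
  have hmin : ContinuousOn (fun v => min v p * g v) (Icc a b) :=
    (continuous_id.min continuous_const).continuousOn.mul hg
  have hlow : ∫ v in a..p, min v p * g v = ∫ v in a..p, v * g v :=
    integral_congr fun v hv => by rw [min_eq_left (uIcc_of_le hp.1 ▸ hv).2]
  have hhigh : ∫ v in p..b, min v p * g v = p * ∫ v in p..b, g v := by
    rw [← integral_const_mul]
    exact integral_congr fun v hv => by rw [min_eq_right (uIcc_of_le hp.2 ▸ hv).1]
  rw [← integral_add_adjacent_intervals (hmin.intervalIntegrable_of_mem ha hp)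
      (hmin.intervalIntegrable_of_mem hp hb), hlow, hhigh,
    integral_interval_sub_left (hg.intervalIntegrable_of_mem ha hb)
      (hg.intervalIntegrable_of_mem ha hp)]

theorem continuousOn_integral_min_mul (hg : ContinuousOn g (Icc a b)) :
    ContinuousOn (fun q => ∫ v in a..b, min v q * g v) (Icc a b) := by
  refine ContinuousOn.congr ?_ fun q hq => integral_min_mul_eq hg hq
  exact (continuousOn_id.mul hg).continuousOn_primitive.add
    (continuousOn_id.mul (continuousOn_const.sub hg.continuousOn_primitive))

theorem hasDerivAt_integral_min_mul (hg : ContinuousOn g (Icc a b)) {p : ℝ} (hp : p ∈ Ioo a b) :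
    HasDerivAt (fun q => ∫ v in a..b, min v q * g v) (∫ v in p..b, g v) p := by
  have hsplit := ((continuousOn_id.mul hg).hasDerivAt_primitive hp).add
    ((hasDerivAt_id p).mul ((hg.hasDerivAt_primitive hp).const_sub (∫ v in a..b, g v)))
  rw [← integral_interval_sub_left (hg.intervalIntegrable_of_Icc (hp.1.trans hp.2).le)
    ((hg.mono (Icc_subset_Icc_right hp.2.le)).intervalIntegrable_of_Icc hp.1.le)]
  refine (hsplit.congr_deriv (by simp)).congr_of_eventuallyEq ?_
  filter_upwards [Icc_mem_nhds hp.1 hp.2] with q hq using integral_min_mul_eq hg hq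

end MinIntegral

theorem isMaxOn_of_hasDerivAt_of_antitoneOn {S D : ℝ → ℝ} {a b c : ℝ}
    (hS : ContinuousOn S (Icc a b)) (hS' : ∀ x ∈ Ioo a b, HasDerivAt S (D x) x)
    (hD : AntitoneOn D (Ioo a b)) (hc : c ∈ Ioo a b) (hDc : D c = 0) :
    IsMaxOn S (Icc a b) c := by
  intro p hp
  rcases le_total p c with hpc | hcp
  · refine monotoneOn_of_hasDerivWithinAt_nonneg (f' := D) (convex_Icc a c)
      (hS.mono (Icc_subset_Icc_right hc.2.le)) (fun x hx => ?_) (fun x hx => ?_)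
      ⟨hp.1, hpc⟩ ⟨hc.1.le, le_rfl⟩ hpc
    all_goals
      rw [interior_Icc] at hx
      have hx' : x ∈ Ioo a b := ⟨hx.1, hx.2.trans hc.2⟩
    · exact (hS' x hx').hasDerivWithinAt
    · exact hDc ▸ hD hx' hc hx.2.le
  · refine antitoneOn_of_hasDerivWithinAt_nonpos (f' := D) (convex_Icc c b)
      (hS.mono (Icc_subset_Icc_left hc.1.le)) (fun x hx => ?_) (fun x hx => ?_)
      ⟨le_rfl, hc.2.le⟩ ⟨hcp, hp.2⟩ hcp
    all_goals
      rw [interior_Icc] at hx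
      have hx' : x ∈ Ioo a b := ⟨hc.1.trans hx.1, hx.2⟩
    · exact (hS' x hx').hasDerivWithinAt
    · exact hDc ▸ hD hc hx' hx.1.le

theorem vertical_integration_surplus_general
    (f F : ℝ → ℝ)
    (hf_cont : ContinuousOn f (Set.Icc 0 1))
    (hf_pos : ∀ x ∈ Set.Icc (0:ℝ) 1, 0 < f x)
    (hf_int : (∫ t in (0:ℝ)..1, f t) = 1)
    (hF : ∀ x, F x = ∫ t in (0:ℝ)..x, f t)
    (J : ℕ)
    (lam : ℝ) (hlam : lam ∈ Set.Ioo (0:ℝ) 1)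
    (hreg : AntitoneOn (fun p : ℝ => 1 - F p - p * f p) (Set.Icc 0 1))
    (S : ℝ → ℝ)
    (hS : ∀ p, S p = (1 - lam) * p * (1 - F p)
        + lam * ∫ v in (0:ℝ)..1, min v p * ((J : ℝ) * F v ^ (J - 1) * f v)) :
    (∀ p ∈ Set.Ioo (0:ℝ) 1,
        HasDerivAt S ((1 - lam) * (1 - F p - p * f p) + lam * (1 - F p ^ J)) p)
    ∧ (∀ pV ∈ Set.Ioo (0:ℝ) 1,
        (1 - lam) * (1 - F pV - pV * f pV)
          + lam * (J : ℝ) * (∫ v in pV..1, F v ^ (J - 1) * f v) = 0 →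
        ∀ p ∈ Set.Icc (0:ℝ) 1, S p ≤ S pV) := by
  obtain ⟨hlam0, hlam1⟩ := hlam
  have hF_eq : F = fun x => ∫ t in (0:ℝ)..x, f t := funext hF
  have hFcont : ContinuousOn F (Icc 0 1) := hF_eq ▸ hf_cont.continuousOn_primitive
  have hFderiv : ∀ x ∈ Ioo (0:ℝ) 1, HasDerivAt F (f x) x :=
    hF_eq ▸ fun _ => hf_cont.hasDerivAt_primitive
  have hFmono : MonotoneOn F (Icc 0 1) :=
    hF_eq ▸ hf_cont.monotoneOn_primitive fun x hx => (hf_pos x hx).le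
  have hF0 : F 0 = 0 := by simp [hF]
  set g : ℝ → ℝ := fun v => (J : ℝ) * F v ^ (J - 1) * f v with hg_def
  have hg : ContinuousOn g (Icc 0 1) := (continuousOn_const.mul (hFcont.pow _)).mul hf_cont
  have htail : ∀ p ∈ Icc (0:ℝ) 1, ∫ v in p..1, g v = 1 - F p ^ J := fun p hp => by
    rw [integral_mul_pow_mul_eq_sub_pow J hp.2 (hFcont.mono (Icc_subset_Icc_left hp.1))
      (fun x hx => hFderiv x ⟨hp.1.trans_lt hx.1, hx.2⟩) (hf_cont.mono (Icc_subset_Icc_left hp.1)),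
      (hF 1).trans hf_int, one_pow]
  have hS_eq : S = fun p => (1 - lam) * p * (1 - F p) + lam * ∫ v in (0:ℝ)..1, min v p * g v :=
    funext hS
  have hderiv : ∀ p ∈ Ioo (0:ℝ) 1,
      HasDerivAt S ((1 - lam) * (1 - F p - p * f p) + lam * (1 - F p ^ J)) p := by
    intro p hp
    rw [hS_eq, ← htail p (Ioo_subset_Icc_self hp)]
    refine ((((hasDerivAt_id p).const_mul (1 - lam)).mul ((hFderiv p hp).const_sub 1)).add
      ((hasDerivAt_integral_min_mul hg hp).const_mul lam)).congr_deriv (by simp only [id]; ring)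
  refine ⟨hderiv, fun pV hpV hFOC => isMaxOn_of_hasDerivAt_of_antitoneOn ?_ hderiv ?_ hpV ?_⟩
  · rw [hS_eq]
    exact ((continuousOn_const.mul continuousOn_id).mul (continuousOn_const.sub hFcont)).add
      (continuousOn_const.mul (continuousOn_integral_min_mul hg))
  · intro x hx y hy hxy
    have hreg_xy : 1 - F y - y * f y ≤ 1 - F x - x * f x :=
      hreg (Ioo_subset_Icc_self hx) (Ioo_subset_Icc_self hy) hxy
    have hFJ : F x ^ J ≤ F y ^ J := pow_le_pow_left₀
      (hF0 ▸ hFmono (left_mem_Icc.2 zero_le_one) (Ioo_subset_Icc_self hx) hx.1.le)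
      (hFmono (Ioo_subset_Icc_self hx) (Ioo_subset_Icc_self hy) hxy) J
    nlinarith
  · rw [← htail pV (Ioo_subset_Icc_self hpV), ← hFOC, hg_def]
    simp only [mul_assoc, integral_const_mul]

/-- (i) The joint (vertically integrated) surplus S is
differentiable with S′(p) = (1−λ)(1 − F(p) − p f(p)) + λ(1 − F(p)^J);
(ii) S is maximized at the best-value managed-campaign posted price p_V. -/
theorem vertical_integration_surplus
    (f F : ℝ → ℝ)
    (hf_cont : ContinuousOn f (Set.Icc 0 1))
    (hf_pos : ∀ x ∈ Set.Icc (0:ℝ) 1, 0 < f x)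
    (hf_logconcave : ConcaveOn ℝ (Set.Icc 0 1) (Real.log ∘ f))
    (hf_int : (∫ t in (0:ℝ)..1, f t) = 1)
    (hF : ∀ x, F x = ∫ t in (0:ℝ)..x, f t)
    (J : ℕ) (hJ : 2 ≤ J)
    (lam : ℝ) (hlam : lam ∈ Set.Ioo (0:ℝ) 1)
    (hreg : AntitoneOn (fun p : ℝ => 1 - F p - p * f p) (Set.Icc 0 1))
    (S : ℝ → ℝ)
    (hS : ∀ p, S p = (1 - lam) * p * (1 - F p)
        + lam * ∫ v in (0:ℝ)..1, min v p * ((J : ℝ) * F v ^ (J - 1) * f v)) :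
    (∀ p ∈ Set.Ioo (0:ℝ) 1,
        HasDerivAt S ((1 - lam) * (1 - F p - p * f p) + lam * (1 - F p ^ J)) p)
    ∧ (∀ pV ∈ Set.Ioo (0:ℝ) 1,
        (1 - lam) * (1 - F pV - pV * f pV)
          + lam * (J : ℝ) * (∫ v in pV..1, F v ^ (J - 1) * f v) = 0 →
        ∀ p ∈ Set.Icc (0:ℝ) 1, S p ≤ S pV) :=
  vertical_integration_surplus_general f F hf_cont hf_pos hf_int hF J lam hlam hreg S hS
end

section
/- Assume regularity condition (H). Let p_M ∈ (0,1) satisfy 1 − F(p_M) = p_M·f(p_M), let p_B ∈ (0,1) satisfy D_B(p_B) = 0, and let p_V ∈ (0,1) satisfy D_V(p_V) = 0. Then p_M ≤ p_B ≤ p_V. Consequently, total consumer surplus CS(p) = (1−λ)·∫_p^1 (v−p) f(v) dv + λ·∫_p^1 (v−p)·J·F(v)^{J−1}·f(v) dv and total welfare W(p) = (1−λ)·∫_p^1 v f(v) dv + λ·∫₀¹ v·J·F(v)^{J−1}·f(v) dv satisfy CS(p_V) ≤ CS(p_B) and W(p_V) ≤ W(p_B). (Posted prices in the optimal sophisticated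 managed campaign are higher, and consumer surplus and welfare lower, than under data-augmented bidding.) -/
/-!
By (H) the monopoly first-order term `G p = 1 - F p - p * f p` is decreasing. At `p_B` the
on-platform term of `D_B` is positive, so `G p_B < 0 = G p_M` and hence `p_M ≤ p_B`. If we had
`p_V < p_B`, the best-value integral at `p_V` would strictly exceed the bidding integral at `p_B`,
because `F (v - p_B) ≤ F v` and the range `[p_V, 1]` is longer; the two first-order conditions would
then give `G p_V < G p_B`, contradicting (H). Consumer surplus and welfare are integrals of
nonnegative functions over `[p, 1]` that shrink as `p` grows, so both decrease from `p_B` to `p_V`.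
-/

open intervalIntegral Set MeasureTheory

theorem strictMonoOn_primitive_of_pos {f : ℝ → ℝ} {a b : ℝ} (hf : ContinuousOn f (Icc a b))
    (hf_pos : ∀ x ∈ Ioo a b, 0 < f x) :
    StrictMonoOn (fun x => ∫ t in a..x, f t) (Icc a b) := by
  intro x hx y hy hxy
  have hint : ∀ z ∈ Icc a b, IntervalIntegrable f volume a z := fun z hz =>
    (hf.mono (Icc_subset_Icc_right hz.2)).intervalIntegrable_of_Icc hz.1
  have hpos : 0 < ∫ t in x..y, f t :=
    intervalIntegral_pos_of_pos_on
      ((hf.mono (Icc_subset_Icc hx.1 hy.2)).intervalIntegrable_of_Icc hxy.le)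
      (fun t ht => hf_pos t ⟨hx.1.trans_lt ht.1, ht.2.trans_le hy.2⟩) hxy
  show ∫ t in a..x, f t < ∫ t in a..y, f t
  linarith [integral_interval_sub_left (hint y hy) (hint x hx)]

theorem antitoneOn_integral_of_nonneg {h : ℝ → ℝ} {a b : ℝ} (hh : ContinuousOn h (Icc a b))
    (hh_nonneg : ∀ x ∈ Icc a b, 0 ≤ h x) :
    AntitoneOn (fun p => ∫ v in p..b, h v) (Icc a b) := by
  intro p hp q hq hpq
  refine integral_mono_interval hpq hq.2 le_rfl ?_ ?_
  · exact ae_restrict_of_forall_mem measurableSet_Ioc fun x hx =>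
      hh_nonneg x ⟨hp.1.trans hx.1.le, hx.2⟩
  · exact (hh.mono (Icc_subset_Icc_left hp.1)).intervalIntegrable_of_Icc hp.2

theorem antitoneOn_integral_sub_mul {g : ℝ → ℝ} {a b : ℝ} (hg : ContinuousOn g (Icc a b))
    (hg_nonneg : ∀ x ∈ Icc a b, 0 ≤ g x) :
    AntitoneOn (fun p => ∫ v in p..b, (v - p) * g v) (Icc a b) := by
  intro p hp q hq hpq
  have hcont : ∀ c, ContinuousOn (fun v => (v - c) * g v) (Icc a b) := fun c =>
    (continuousOn_id.sub continuousOn_const).mul hg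
  have hqb : Icc q b ⊆ Icc a b := Icc_subset_Icc_left hq.1
  calc ∫ v in q..b, (v - q) * g v
      ≤ ∫ v in q..b, (v - p) * g v :=
        integral_mono_on hq.2 ((hcont q).mono hqb |>.intervalIntegrable_of_Icc hq.2)
          ((hcont p).mono hqb |>.intervalIntegrable_of_Icc hq.2) fun v hv =>
          mul_le_mul_of_nonneg_right (by linarith) (hg_nonneg v (hqb hv))
    _ ≤ ∫ v in p..b, (v - p) * g v :=
        antitoneOn_integral_of_nonneg ((hcont p).mono (Icc_subset_Icc_left hp.1))
          (fun v hv => mul_nonneg (sub_nonneg.2 hv.1) (hg_nonneg v ⟨hp.1.trans hv.1, hv.2⟩))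
          ⟨le_rfl, hp.2⟩ ⟨hpq, hq.2⟩ hpq

section CDF

variable {f F : ℝ → ℝ}

theorem cdf_strictMonoOn (hf : ContinuousOn f (Icc 0 1)) (hf_pos : ∀ x ∈ Icc 0 1, 0 < f x)
    (hF : ∀ x, F x = ∫ t in (0:ℝ)..x, f t) : StrictMonoOn F (Icc 0 1) :=
  funext hF ▸ strictMonoOn_primitive_of_pos hf fun x hx => hf_pos x (Ioo_subset_Icc_self hx)

theorem cdf_continuousOn (hf : ContinuousOn f (Icc 0 1))
    (hF : ∀ x, F x = ∫ t in (0:ℝ)..x, f t) : ContinuousOn F (Icc 0 1) := by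
  rw [funext hF, ← uIcc_of_le zero_le_one]
  exact continuousOn_primitive_interval (uIcc_of_le (zero_le_one' ℝ) ▸ hf.integrableOn_Icc)

theorem cdf_pos (hf : ContinuousOn f (Icc 0 1)) (hf_pos : ∀ x ∈ Icc 0 1, 0 < f x)
    (hF : ∀ x, F x = ∫ t in (0:ℝ)..x, f t) {x : ℝ} (hx0 : 0 < x) (hx1 : x ≤ 1) : 0 < F x := by
  simpa [hF 0] using cdf_strictMonoOn hf hf_pos hF ⟨le_rfl, zero_le_one⟩ ⟨hx0.le, hx1⟩ hx0

theorem cdf_nonneg (hf : ContinuousOn f (Icc 0 1)) (hf_pos : ∀ x ∈ Icc 0 1, 0 < f x)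
    (hF : ∀ x, F x = ∫ t in (0:ℝ)..x, f t) {x : ℝ} (hx : x ∈ Icc 0 1) : 0 ≤ F x :=
  hx.1.eq_or_lt.elim (fun h => by simp [← h, hF 0]) fun h => (cdf_pos hf hf_pos hF h hx.2).le

theorem continuousOn_cdf_sub_pow_mul (hf : ContinuousOn f (Icc 0 1))
    (hF : ∀ x, F x = ∫ t in (0:ℝ)..x, f t) (n : ℕ) {p : ℝ} (hp : 0 ≤ p) :
    ContinuousOn (fun v => F (v - p) ^ n * f v) (Icc p 1) := by
  have hmaps : MapsTo (fun v => v - p) (Icc p 1) (Icc 0 1) := fun v hv =>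
    ⟨sub_nonneg.2 hv.1, by linarith [hv.2]⟩
  exact (((cdf_continuousOn hf hF).comp (continuousOn_id.sub continuousOn_const) hmaps).pow n).mul
    (hf.mono (Icc_subset_Icc_left hp))

theorem integral_cdf_sub_pow_mul_pos (hf : ContinuousOn f (Icc 0 1))
    (hf_pos : ∀ x ∈ Icc 0 1, 0 < f x) (hF : ∀ x, F x = ∫ t in (0:ℝ)..x, f t) (n : ℕ)
    {p : ℝ} (hp0 : 0 ≤ p) (hp1 : p < 1) :
    0 < ∫ v in p..1, F (v - p) ^ n * f v := by
  refine intervalIntegral_pos_of_pos_on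
    ((continuousOn_cdf_sub_pow_mul hf hF n hp0).intervalIntegrable_of_Icc hp1.le)
    (fun v hv => ?_) hp1
  have := cdf_pos hf hf_pos hF (sub_pos.2 hv.1) (by linarith [hv.2])
  have := hf_pos v ⟨by linarith [hv.1], hv.2.le⟩
  positivity

theorem integral_cdf_sub_pow_mul_lt (hf : ContinuousOn f (Icc 0 1))
    (hf_pos : ∀ x ∈ Icc 0 1, 0 < f x) (hF : ∀ x, F x = ∫ t in (0:ℝ)..x, f t) (n : ℕ)
    {p q : ℝ} (hq : 0 ≤ q) (hqp : q < p) (hp : p ≤ 1) :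
    ∫ v in p..1, F (v - p) ^ n * f v < ∫ v in q..1, F v ^ n * f v := by
  have hcont : ContinuousOn (fun v => F v ^ n * f v) (Icc 0 1) :=
    ((cdf_continuousOn hf hF).pow n).mul hf
  have hint : ∀ a b, 0 ≤ a → a ≤ b → b ≤ 1 →
      IntervalIntegrable (fun v => F v ^ n * f v) volume a b := fun a b ha hab hb =>
    (hcont.mono (Icc_subset_Icc ha hb)).intervalIntegrable_of_Icc hab
  have hp0 : 0 ≤ p := hq.trans hqp.le
  have hlow : 0 < ∫ v in q..p, F v ^ n * f v := by
    refine intervalIntegral_pos_of_pos_on (hint q p hq hqp.le hp) (fun v hv => ?_) hqp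
    have := cdf_pos hf hf_pos hF (hq.trans_lt hv.1) (hv.2.le.trans hp)
    have := hf_pos v ⟨by linarith [hv.1], by linarith [hv.2]⟩
    positivity
  have hhigh : ∫ v in p..1, F (v - p) ^ n * f v ≤ ∫ v in p..1, F v ^ n * f v := by
    refine integral_mono_on hp
      ((continuousOn_cdf_sub_pow_mul hf hF n hp0).intervalIntegrable_of_Icc hp)
      (hint p 1 hp0 hp le_rfl) fun v hv => ?_
    have hv01 : v ∈ Icc (0 : ℝ) 1 := ⟨hp0.trans hv.1, hv.2⟩
    have hvp01 : v - p ∈ Icc (0 : ℝ) 1 := ⟨sub_nonneg.2 hv.1, by linarith [hv.2]⟩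
    have := cdf_nonneg hf hf_pos hF hvp01
    gcongr
    · exact (hf_pos v hv01).le
    · exact (cdf_strictMonoOn hf hf_pos hF).monotoneOn hvp01 hv01 (by linarith)
  rw [← integral_add_adjacent_intervals (hint q p hq hqp.le hp) (hint p 1 hp0 hp le_rfl)]
  linarith

end CDF

theorem managed_campaign_prices_highest_general
    (f F : ℝ → ℝ)
    (hf_cont : ContinuousOn f (Set.Icc 0 1))
    (hf_pos : ∀ x ∈ Set.Icc (0:ℝ) 1, 0 < f x)
    (hF : ∀ x, F x = ∫ t in (0:ℝ)..x, f t)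
    (J : ℕ) (hJ : 2 ≤ J)
    (lam : ℝ) (hlam : lam ∈ Set.Ioo (0:ℝ) 1)
    (hreg : AntitoneOn (fun p : ℝ => 1 - F p - p * f p) (Set.Icc 0 1))
    (pM pB pV : ℝ)
    (hpM : pM ∈ Set.Ioo (0:ℝ) 1) (hpB : pB ∈ Set.Ioo (0:ℝ) 1)
    (hpV : pV ∈ Set.Ioo (0:ℝ) 1)
    (hM : 1 - F pM = pM * f pM)
    (hB : (1 - lam) * (1 - F pB - pB * f pB)
        + lam * (J : ℝ) * (∫ v in pB..1, F (v - pB) ^ (J - 1) * f v) = 0)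
    (hV : (1 - lam) * (1 - F pV - pV * f pV)
        + lam * (J : ℝ) * (∫ v in pV..1, F v ^ (J - 1) * f v) = 0)
    (CS W : ℝ → ℝ)
    (hCS : ∀ p, CS p = (1 - lam) * (∫ v in p..1, (v - p) * f v)
        + lam * ∫ v in p..1, (v - p) * ((J : ℝ) * F v ^ (J - 1) * f v))
    (hW : ∀ p, W p = (1 - lam) * (∫ v in p..1, v * f v)
        + lam * ∫ v in (0:ℝ)..1, v * ((J : ℝ) * F v ^ (J - 1) * f v)) :
    pM ≤ pB ∧ pB ≤ pV ∧ CS pV ≤ CS pB ∧ W pV ≤ W pB := by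
  obtain ⟨hlam0, hlam1⟩ := hlam
  have hJ0 : (0 : ℝ) < J := by exact_mod_cast (by omega : 0 < J)
  have mem {p : ℝ} (hp : p ∈ Ioo (0:ℝ) 1) : p ∈ Icc (0:ℝ) 1 := Ioo_subset_Icc_self hp
  have hMB : pM ≤ pB := by
    have hI := integral_cdf_sub_pow_mul_pos hf_cont hf_pos hF (J - 1) hpB.1.le hpB.2
    have hG : 1 - F pB - pB * f pB < 1 - F pM - pM * f pM := by
      nlinarith [mul_pos (mul_pos hlam0 hJ0) hI]
    exact (hreg.reflect_lt (mem hpB) (mem hpM) hG).le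
  have hBV : pB ≤ pV := by
    by_contra! hVB
    have hI := integral_cdf_sub_pow_mul_lt hf_cont hf_pos hF (J - 1) hpV.1.le hVB hpB.2.le
    have hG : (1 - lam) * (1 - F pV - pV * f pV) < (1 - lam) * (1 - F pB - pB * f pB) := by
      nlinarith [mul_lt_mul_of_pos_left hI (mul_pos hlam0 hJ0)]
    exact lt_asymm hVB (hreg.reflect_lt (mem hpV) (mem hpB)
      (lt_of_mul_lt_mul_left hG (by linarith)))
  refine ⟨hMB, hBV, ?_, ?_⟩
  · rw [hCS, hCS]
    gcongr (1 - lam) * ?_ + lam * ?_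
    · exact antitoneOn_integral_sub_mul hf_cont (fun v hv => (hf_pos v hv).le)
        (mem hpB) (mem hpV) hBV
    · refine antitoneOn_integral_sub_mul (g := fun v => (J : ℝ) * F v ^ (J - 1) * f v)
        ((continuousOn_const.mul ((cdf_continuousOn hf_cont hF).pow _)).mul hf_cont)
        (fun v hv => ?_) (mem hpB) (mem hpV) hBV
      have := cdf_nonneg hf_cont hf_pos hF hv
      have := hf_pos v hv
      positivity
  · rw [hW, hW]
    gcongr (1 - lam) * ?_ + _
    exact antitoneOn_integral_of_nonneg (continuousOn_id.mul hf_cont)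
      (fun v hv => mul_nonneg hv.1 (hf_pos v hv).le) (mem hpB) (mem hpV) hBV

/-- p_M ≤ p_B ≤ p_V: posted prices in the optimal sophisticated
managed campaign are higher than under data-augmented bidding, which are
higher than the monopoly price; hence consumer surplus and welfare are lower
in the managed campaign. -/
theorem managed_campaign_prices_highest
    (f F : ℝ → ℝ)
    (hf_cont : ContinuousOn f (Set.Icc 0 1))
    (hf_pos : ∀ x ∈ Set.Icc (0:ℝ) 1, 0 < f x)
    (hf_logconcave : ConcaveOn ℝ (Set.Icc 0 1) (Real.log ∘ f))
    (hf_int : (∫ t in (0:ℝ)..1, f t) = 1)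
    (hF : ∀ x, F x = ∫ t in (0:ℝ)..x, f t)
    (J : ℕ) (hJ : 2 ≤ J)
    (lam : ℝ) (hlam : lam ∈ Set.Ioo (0:ℝ) 1)
    (hreg : AntitoneOn (fun p : ℝ => 1 - F p - p * f p) (Set.Icc 0 1))
    (pM pB pV : ℝ)
    (hpM : pM ∈ Set.Ioo (0:ℝ) 1) (hpB : pB ∈ Set.Ioo (0:ℝ) 1)
    (hpV : pV ∈ Set.Ioo (0:ℝ) 1)
    (hM : 1 - F pM = pM * f pM)
    (hB : (1 - lam) * (1 - F pB - pB * f pB)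
        + lam * (J : ℝ) * (∫ v in pB..1, F (v - pB) ^ (J - 1) * f v) = 0)
    (hV : (1 - lam) * (1 - F pV - pV * f pV)
        + lam * (J : ℝ) * (∫ v in pV..1, F v ^ (J - 1) * f v) = 0)
    (CS W : ℝ → ℝ)
    (hCS : ∀ p, CS p = (1 - lam) * (∫ v in p..1, (v - p) * f v)
        + lam * ∫ v in p..1, (v - p) * ((J : ℝ) * F v ^ (J - 1) * f v))
    (hW : ∀ p, W p = (1 - lam) * (∫ v in p..1, v * f v)
        + lam * ∫ v in (0:ℝ)..1, v * ((J : ℝ) * F v ^ (J - 1) * f v)) :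
    pM ≤ pB ∧ pB ≤ pV ∧ CS pV ≤ CS pB ∧ W pV ≤ W pB :=
  managed_campaign_prices_highest_general f F hf_cont hf_pos hF J hJ lam hlam hreg pM pB pV hpM hpB
    hpV hM hB hV CS W hCS hW
end
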